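/- arXiv:2207.01428 — 2 statements merged into one kernel-verified Lean document; each statement's English description precedes it below -/
import Mathlib

section
/- With α_n^i and β_n^i defined by the recurrences of the paper (α the elementary symmetric polynomials of ε_1,…,ε_n; β as in the β-recurrence), where ε_k ≥ 0, ω_k ∈ [0,1), κ_k > 0: fix 0 ≤ k ≤ n−1 and assume α_n^{n−k} = 0. Then β_n^{2n} = β_n^{2n−1} = … = β_n^{2n−k} = 0. -/
theorem alpha_zero_implies_beta_top_zero (ε ω κ : ℕ → ℝ)
    (hε : ∀ k, 0 ≤ ε k) (hω : ∀ k, 0 ≤ ω k ∧ ω k < 1) (hκ : ∀ k, 0 < κ k)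
    (β : ℕ → ℕ → ℝ)
    (hb11 : β 1 1 = ε 1 * κ 1 + κ 0)
    (hb12 : β 1 2 = ε 1 * ω 1 * κ 0)
    (hbn1 : ∀ n, 2 ≤ n → β n 1 = ε n * κ n + κ (n-1))
    (hbn2 : ∀ n, 2 ≤ n → β n 2 = ε n * ω n * κ (n-1) + β (n-1) 1)
    (hbni : ∀ n i, 2 ≤ n → 3 ≤ i → i ≤ 2*n - 1 →
      β n i = ε n * β (n-1) (i-2) + β (n-1) (i-1))
    (hbn2n : ∀ n, 2 ≤ n → β n (2*n) = ε n * β (n-1) (2*(n-1))) :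
    ∀ n k, 1 ≤ n → k ≤ n - 1 →
      (∑ t ∈ (Finset.Icc 1 n).powersetCard (n-k), ∏ j ∈ t, ε j) = 0 →
      ∀ j, 2*n - k ≤ j → j ≤ 2*n → β n j = 0 := by
  have key : ∀ n, 1 ≤ n → ∀ j, 1 ≤ j → j ≤ 2*n →
      (∀ t ⊆ Finset.Icc 1 n, t.card = j - n → (∏ i ∈ t, ε i) = 0) → β n j = 0 := by
    intro n
    induction n with
    | zero => intro h; omega
    | succ m ih =>
      intro _ j hj1 hj2 hZ
      by_cases hjn : j ≤ m + 1
      · exfalso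
        have h0 := hZ ∅ (Finset.empty_subset _) (by simp; omega)
        simp at h0
      -- now j ≥ m + 2
      · rcases Nat.eq_zero_or_pos m with rfl | hm1
        · -- n = 1, j = 2
          have hj : j = 2 := by omega
          subst hj
          have h1 : ε 1 = 0 := by
            have := hZ {1} (by simp) (by simp)
            simpa using this
          rw [hb12, h1]; ring
        · have hm2 : 2 ≤ m + 1 := by omega
          have hZ' : ε (m+1) ≠ 0 → ∀ t ⊆ Finset.Icc 1 m, t.card = j - (m+1) - 1 →
              (∏ i ∈ t, ε i) = 0 := by
            intro hne t ht hc
            have hnot : (m+1) ∉ t := by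
              intro h
              have := ht h
              simp [Finset.mem_Icc] at this
            have hsub : insert (m+1) t ⊆ Finset.Icc 1 (m+1) := by
              intro x hx
              rcases Finset.mem_insert.mp hx with rfl | hx
              · simp [Finset.mem_Icc]
              · have := ht hx
                simp only [Finset.mem_Icc] at this ⊢
                omega
            have hcard : (insert (m+1) t).card = j - (m+1) := by
              rw [Finset.card_insert_of_notMem hnot, hc]; omega
            have h0 := hZ _ hsub hcard
            rw [Finset.prod_insert hnot] at h0
            exact (mul_eq_zero.mp h0).resolve_left hne
          by_cases hjtop : j = 2*(m+1)
          · subst hjtop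
            rw [hbn2n (m+1) hm2]
            by_cases hne : ε (m+1) = 0
            · rw [hne, zero_mul]
            · have hb := ih hm1 (2*m) (by omega) (by omega)
                (fun t ht hc => hZ' hne t ht (by omega))
              simp only [Nat.add_sub_cancel]
              rw [hb, mul_zero]
          · -- m + 2 ≤ j ≤ 2m + 1
            rw [hbni (m+1) j hm2 (by omega) (by omega)]
            have h2 : β m (j-1) = 0 := by
              apply ih hm1 (j-1) (by omega) (by omega)
              intro t ht hc
              exact hZ t (ht.trans (Finset.Icc_subset_Icc_right (by omega))) (by omega)
            have h1 : ε (m+1) * β m (j-2) = 0 := by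
              by_cases hne : ε (m+1) = 0
              · rw [hne, zero_mul]
              · rw [ih hm1 (j-2) (by omega) (by omega)
                  (fun t ht hc => hZ' hne t ht (by omega)), mul_zero]
            simp only [Nat.add_sub_cancel]
            rw [h1, h2, add_zero]
  intro n k hn hk hsum j hj1 hj2
  apply key n hn j (by omega) hj2
  intro t ht hc
  obtain ⟨s, hs, hcs⟩ := Finset.exists_subset_card_eq (s := t) (n := n-k) (by omega)
  have hs0 : (∏ i ∈ s, ε i) = 0 := by
    have hmem : s ∈ (Finset.Icc 1 n).powersetCard (n-k) :=
      Finset.mem_powersetCard.mpr ⟨hs.trans ht, hcs⟩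
    exact (Finset.sum_eq_zero_iff_of_nonneg
      (fun x _ => Finset.prod_nonneg (fun i _ => hε i))).mp hsum s hmem
  rw [← Finset.prod_sdiff hs, hs0, mul_zero]
end

section
/- Let n ≥ 1 and let q, u : ℝ → ℝ be smooth. Suppose q + Σ_{i=1}^n α_n^i·q^{(i)} = −κ_n·u − Σ_{i=1}^{2n} β_n^i·u^{(i)} (heat law of order n, with ∇ suppressed and u = u_n), where coefficients satisfy the recurrences of the paper. Let ε_{n+1} > 0 and let F(t) = ∫₀^∞ (1/ε_{n+1})e^{−s/ε_{n+1}}·u(t−s) ds, and suppose instead q + Σ α_n^i q^{(i)} = −ω_{n+1}κ_n u − (1−ω_{n+1})κ_n F − Σ β_n^i u^{(i)} − κ_{n+1}·U, where U' = u. Then adding ε_{n+1} times the time derivative of this relation to the relation itself yields q + Σ_{i=1}^{n+1} α_{n+1}^i q^{(i)} = −κ_{n+1} U − Σ_{i=1}^{2n+2} β_{n+1}^i·U^{(i)}, where α_{n+1}, β_{n+1} are given by the recurrences α_{n+1}^1 = ε_{n+1}+α_n^1, α_{n+1}^i = ε_{n+1}α_n^{i−1}+α_n^i (2≤i≤n),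 α_{n+1}^{n+1} = ε_{n+1}α_n^n, β_{n+1}^1 = ε_{n+1}κ_{n+1}+κ_n, β_{n+1}^2 = ε_{n+1}ω_{n+1}κ_n+β_n^1, β_{n+1}^i = ε_{n+1}β_n^{i−2}+β_n^{i−1} (3≤i≤2n+1), β_{n+1}^{2n+2} = ε_{n+1}β_n^{2n}. -/
open MeasureTheory Set Real

theorem inductive_step_heat_law
    (n : ℕ) (hn : 1 ≤ n)
    (q u U F : ℝ → ℝ)
    (hq : ContDiff ℝ (⊤ : ℕ∞) q) (hu : ContDiff ℝ (⊤ : ℕ∞) u) (hU : ContDiff ℝ (⊤ : ℕ∞) U)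
    (hubdd : ∃ M, ∀ x, |u x| ≤ M)
    (ε ω κn κn1 : ℝ) (hε : 0 < ε)
    (α β αnew βnew : ℕ → ℝ)
    (hF : ∀ t, F t = ∫ s in Set.Ioi (0:ℝ), (1/ε) * Real.exp (-s/ε) * u (t - s))
    (hUder : ∀ t, HasDerivAt U (u t) t)
    (hlaw : ∀ t,
      q t + ∑ i ∈ Finset.Icc 1 n, α i * iteratedDeriv i q t =
        -(ω * κn) * u t - ((1 - ω) * κn) * F t -
          (∑ i ∈ Finset.Icc 1 (2*n), β i * iteratedDeriv i u t) - κn1 * U t)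
    (hα1 : αnew 1 = ε + α 1)
    (hαi : ∀ i, 2 ≤ i → i ≤ n → αnew i = ε * α (i-1) + α i)
    (hαtop : αnew (n+1) = ε * α n)
    (hβ1 : βnew 1 = ε * κn1 + κn)
    (hβ2 : βnew 2 = ε * ω * κn + β 1)
    (hβi : ∀ i, 3 ≤ i → i ≤ 2*n + 1 → βnew i = ε * β (i-2) + β (i-1))
    (hβtop : βnew (2*n+2) = ε * β (2*n)) :
    ∀ t,
      q t + ∑ i ∈ Finset.Icc 1 (n+1), αnew i * iteratedDeriv i q t =
        -κn1 * U t - ∑ i ∈ Finset.Icc 1 (2*n+2), βnew i * iteratedDeriv i U t := by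
  obtain ⟨M, hM⟩ := hubdd
  have hεne : ε ≠ 0 := hε.ne'
  -- smoothness of iterated derivatives
  have hqi : ∀ i : ℕ, ContDiff ℝ (⊤ : ℕ∞) (iteratedDeriv i q) := by
    intro i; rw [iteratedDeriv_eq_iterate]
    exact ContDiff.iterate_deriv i (hq.of_le (by simp))
  have hui : ∀ i : ℕ, ContDiff ℝ (⊤ : ℕ∞) (iteratedDeriv i u) := by
    intro i; rw [iteratedDeriv_eq_iterate]
    exact ContDiff.iterate_deriv i (hu.of_le (by simp))
  have hqd : ∀ (i : ℕ) (t : ℝ), HasDerivAt (iteratedDeriv i q) (iteratedDeriv (i+1) q t) t := by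
    intro i t
    rw [iteratedDeriv_succ]
    exact (((hqi i).differentiable (by simp)) t).hasDerivAt
  have hud : ∀ (i : ℕ) (t : ℝ), HasDerivAt (iteratedDeriv i u) (iteratedDeriv (i+1) u t) t := by
    intro i t
    rw [iteratedDeriv_succ]
    exact (((hui i).differentiable (by simp)) t).hasDerivAt
  have hderivU : deriv U = u := funext fun t => (hUder t).deriv
  have hDU : ∀ j : ℕ, iteratedDeriv (j+1) U = iteratedDeriv j u := by
    intro j; rw [iteratedDeriv_succ', hderivU]
  -- the kernel-weighted primitive
  set g : ℝ → ℝ := fun r => Real.exp (r/ε) * u r with hg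
  have hgc : Continuous g := by
    rw [hg]
    exact (Real.continuous_exp.comp (continuous_id.div_const ε)).mul hu.continuous
  have hM0 : 0 ≤ M := le_trans (abs_nonneg _) (hM 0)
  have hgint : ∀ t : ℝ, IntegrableOn g (Iic t) := by
    intro t
    apply integrableOn_Iic_of_intervalIntegral_norm_bounded
      (M * (ε * Real.exp (t/ε))) t (a := fun i : ℝ => i) (l := Filter.atBot)
      (fun i => hgc.integrableOn_Ioc) Filter.tendsto_id
    filter_upwards [Filter.eventually_le_atBot t] with i hi
    have h1 : ∫ x in i..t, ‖g x‖ ≤ ∫ x in i..t, M * Real.exp (x/ε) := by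
      apply intervalIntegral.integral_mono_on hi
      · exact (hgc.norm.intervalIntegrable _ _)
      · exact ((continuous_const.mul (Real.continuous_exp.comp
          (continuous_id.div_const ε))).intervalIntegrable _ _)
      · intro x _
        have hgx : ‖g x‖ = Real.exp (x/ε) * |u x| := by
          rw [hg]; simp [abs_mul, abs_of_pos (Real.exp_pos _), Real.norm_eq_abs]
        rw [hgx, mul_comm M]
        exact mul_le_mul_of_nonneg_left (hM x) (Real.exp_pos _).le
    have h2 : ∫ x in i..t, M * Real.exp (x/ε) = M * (ε * (Real.exp (t/ε) - Real.exp (i/ε))) := by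
      rw [intervalIntegral.integral_const_mul]
      rw [intervalIntegral.integral_comp_div (f := Real.exp) hεne, integral_exp]
      simp [smul_eq_mul]
    refine h1.trans (h2.le.trans ?_)
    have hsub : Real.exp (t/ε) - Real.exp (i/ε) ≤ Real.exp (t/ε) := by
      have := (Real.exp_pos (i/ε)).le; linarith
    exact mul_le_mul_of_nonneg_left (mul_le_mul_of_nonneg_left hsub hε.le) hM0
  -- rewrite F via the primitive
  have hFt : ∀ t, F t = (1/ε) * Real.exp (-t/ε) * ∫ r in Iic t, g r := by
    intro t
    rw [hF t]
    have hemb : MeasurableEmbedding (fun s : ℝ => t - s) := by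
      have := (Homeomorph.subLeft t (G := ℝ)).measurableEmbedding
      simpa using this
    have hmp : MeasurePreserving (fun s : ℝ => t - s) volume volume :=
      MeasureTheory.Measure.measurePreserving_sub_left volume t
    have hpre : (fun s : ℝ => t - s) ⁻¹' (Iio t) = Ioi 0 := by
      ext s; simp only [mem_preimage, mem_Iio, mem_Ioi]
      constructor <;> intro h <;> linarith
    have key := hmp.setIntegral_preimage_emb hemb
      (fun r => (1/ε) * Real.exp ((r - t)/ε) * u r) (Iio t)
    rw [hpre] at key
    rw [show (∫ s in Set.Ioi (0:ℝ), (1/ε) * Real.exp (-s/ε) * u (t - s))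
        = ∫ s in Set.Ioi (0:ℝ), (1/ε) * Real.exp (((t - s) - t)/ε) * u (t - s) from
      setIntegral_congr_fun measurableSet_Ioi (fun s _ => by
        rw [show (t - s - t)/ε = -s/ε by ring])]
    rw [key]
    rw [show (∫ r in Iio t, (1/ε) * Real.exp ((r - t)/ε) * u r)
        = ∫ r in Iio t, (1/ε) * Real.exp (-t/ε) * g r from
      setIntegral_congr_fun measurableSet_Iio (fun r _ => by
        rw [hg]
        rw [show (r - t)/ε = -t/ε + r/ε by ring, Real.exp_add]
        ring)]
    rw [MeasureTheory.integral_const_mul]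
    rw [← MeasureTheory.integral_Iic_eq_integral_Iio]
  -- derivative of F
  have hFder : ∀ t, HasDerivAt F ((u t - F t) / ε) t := by
    intro t
    have hG : HasDerivAt (fun x => ∫ r in Iic x, g r) (g t) t := by
      have heq : ∀ x : ℝ, (∫ r in Iic x, g r) = (∫ r in Iic t, g r) + ∫ r in t..x, g r := by
        intro x
        rw [← intervalIntegral.integral_Iic_sub_Iic (hgint t) (hgint x)]
        ring
      have hid : HasDerivAt (fun x => (∫ r in Iic t, g r) + ∫ r in t..x, g r) (g t) t := by
        apply HasDerivAt.const_add
        exact intervalIntegral.integral_hasDerivAt_right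
          ((hgc.intervalIntegrable _ _))
          (hgc.stronglyMeasurableAtFilter _ _)
          hgc.continuousAt
      exact hid.congr_of_eventuallyEq (Filter.Eventually.of_forall heq)
    have hFun : F = fun x => (1/ε) * Real.exp (-x/ε) * ∫ r in Iic x, g r :=
      funext hFt
    have hexp : HasDerivAt (fun x : ℝ => (1/ε) * Real.exp (-x/ε))
        ((1/ε) * (Real.exp (-t/ε) * (-1/ε))) t := by
      have h1 : HasDerivAt (fun x : ℝ => -x/ε) (-1/ε) t := by
        simpa using (hasDerivAt_id t).neg.div_const ε
      exact (h1.exp).const_mul (1/ε)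
    have hprod := hexp.fun_mul hG
    rw [← hFun] at hprod
    refine hprod.congr_deriv (Eq.symm ?_)
    have hgt : g t = Real.exp (t/ε) * u t := rfl
    have hee : Real.exp (-t/ε) * Real.exp (t/ε) = 1 := by
      rw [← Real.exp_add, show -t/ε + t/ε = 0 by ring, Real.exp_zero]
    rw [hFt t, hgt]
    linear_combination (-(u t) / ε) * hee
  -- differentiate the law
  have hE1 : ∀ t,
      iteratedDeriv 1 q t + ∑ i ∈ Finset.Icc 1 n, α i * iteratedDeriv (i+1) q t =
        -(ω * κn) * iteratedDeriv 1 u t - ((1 - ω) * κn) * ((u t - F t)/ε) -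
          (∑ i ∈ Finset.Icc 1 (2*n), β i * iteratedDeriv (i+1) u t) - κn1 * u t := by
    intro t
    have h0q : HasDerivAt q (iteratedDeriv 1 q t) t := by
      have := hqd 0 t; rwa [iteratedDeriv_zero] at this
    have h0u : HasDerivAt u (iteratedDeriv 1 u t) t := by
      have := hud 0 t; rwa [iteratedDeriv_zero] at this
    have hL : HasDerivAt (fun x => q x + ∑ i ∈ Finset.Icc 1 n, α i * iteratedDeriv i q x)
        (iteratedDeriv 1 q t + ∑ i ∈ Finset.Icc 1 n, α i * iteratedDeriv (i+1) q t) t :=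
      h0q.fun_add (HasDerivAt.fun_sum fun i _ => (hqd i t).const_mul (α i))
    have hR : HasDerivAt (fun x => -(ω * κn) * u x - ((1 - ω) * κn) * F x -
          (∑ i ∈ Finset.Icc 1 (2*n), β i * iteratedDeriv i u x) - κn1 * U x)
        (-(ω * κn) * iteratedDeriv 1 u t - ((1 - ω) * κn) * ((u t - F t)/ε) -
          (∑ i ∈ Finset.Icc 1 (2*n), β i * iteratedDeriv (i+1) u t) - κn1 * u t) t :=
      (((h0u.const_mul (-(ω * κn))).fun_sub ((hFder t).const_mul ((1 - ω) * κn))).fun_sub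
        (HasDerivAt.fun_sum fun i _ => (hud i t).const_mul (β i))).fun_sub
        ((hUder t).const_mul κn1)
    have hfun : (fun x => q x + ∑ i ∈ Finset.Icc 1 n, α i * iteratedDeriv i q x)
        = (fun x => -(ω * κn) * u x - ((1 - ω) * κn) * F x -
          (∑ i ∈ Finset.Icc 1 (2*n), β i * iteratedDeriv i u x) - κn1 * U x) :=
      funext hlaw
    rw [hfun] at hL
    exact hL.unique hR
  -- now the algebra
  intro t
  obtain ⟨m, rfl⟩ : ∃ m, n = m + 1 := ⟨n - 1, (Nat.succ_pred_eq_of_pos hn).symm⟩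
  have hIcc : ∀ (k : ℕ) (f : ℕ → ℝ), ∑ i ∈ Finset.Icc 1 k, f i
      = ∑ i ∈ Finset.range k, f (i + 1) := by
    intro k f
    rw [← Finset.Ico_add_one_right_eq_Icc, Finset.sum_Ico_eq_sum_range]
    have hk : k + 1 - 1 = k := by omega
    rw [hk]
    exact Finset.sum_congr rfl fun i _ => by rw [Nat.add_comm]
  -- (A)
  have hA : ∑ i ∈ Finset.Icc 1 (m+1+1), αnew i * iteratedDeriv i q t
      = ∑ i ∈ Finset.Icc 1 (m+1), α i * iteratedDeriv i q t
        + ε * iteratedDeriv 1 q t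
        + ε * ∑ i ∈ Finset.Icc 1 (m+1), α i * iteratedDeriv (i+1) q t := by
    rw [hIcc, hIcc, hIcc]
    rw [Finset.sum_range_succ, Finset.sum_range_succ']
    rw [show ∑ i ∈ Finset.range m, αnew (i + 1 + 1) * iteratedDeriv (i + 1 + 1) q t
        = ∑ i ∈ Finset.range m,
          (ε * (α (i+1) * iteratedDeriv (i+1+1) q t)
            + α (i+1+1) * iteratedDeriv (i+1+1) q t) from
      Finset.sum_congr rfl fun i hi => by
        have h2 : 2 ≤ i+1+1 := by omega
        have h3 : i+1+1 ≤ m + 1 := by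
          have := Finset.mem_range.mp hi; omega
        have e := hαi _ h2 h3
        have e1 : i+1+1-1 = i+1 := by omega
        rw [e1] at e
        linear_combination (iteratedDeriv (i+1+1) q t) * e]
    rw [Finset.sum_add_distrib, ← Finset.mul_sum]
    rw [show ∑ i ∈ Finset.range (m+1), α (i+1) * iteratedDeriv (i+1) q t
        = ∑ i ∈ Finset.range m, α (i+1+1) * iteratedDeriv (i+1+1) q t
          + α (0+1) * iteratedDeriv (0+1) q t from Finset.sum_range_succ' _ _]
    rw [show ∑ i ∈ Finset.range (m+1), α (i+1) * iteratedDeriv (i+1+1) q t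
        = ∑ i ∈ Finset.range m, α (i+1) * iteratedDeriv (i+1+1) q t
          + α (m+1) * iteratedDeriv (m+1+1) q t from Finset.sum_range_succ _ _]
    rw [hα1, hαtop]
    simp only [Nat.zero_add]
    ring
  -- (B)
  have hB : ∑ i ∈ Finset.Icc 1 (2*(m+1)+2), βnew i * iteratedDeriv i U t
      = ε * κn1 * u t + κn * u t + ε * ω * κn * iteratedDeriv 1 u t
        + ∑ i ∈ Finset.Icc 1 (2*(m+1)), β i * iteratedDeriv i u t
        + ε * ∑ i ∈ Finset.Icc 1 (2*(m+1)), β i * iteratedDeriv (i+1) u t := by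
    rw [show 2*(m+1)+2 = 2*m+3+1 by ring, show 2*(m+1) = 2*m+1+1 by ring]
    rw [hIcc, hIcc, hIcc]
    rw [show ∑ i ∈ Finset.range (2*m+3+1), βnew (i+1) * iteratedDeriv (i+1) U t
        = ∑ i ∈ Finset.range (2*m+3+1), βnew (i+1) * iteratedDeriv i u t from
      Finset.sum_congr rfl fun i _ => by rw [hDU i]]
    rw [Finset.sum_range_succ, Finset.sum_range_succ', Finset.sum_range_succ']
    rw [show ∑ i ∈ Finset.range (2*m+1), βnew (i+1+1+1) * iteratedDeriv (i+1+1) u t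
        = ∑ i ∈ Finset.range (2*m+1),
            (ε * (β (i+1) * iteratedDeriv (i+1+1) u t)
              + β (i+1+1) * iteratedDeriv (i+1+1) u t) from
      Finset.sum_congr rfl fun i hi => by
        have h3 : 3 ≤ i+1+1+1 := by omega
        have h4 : i+1+1+1 ≤ 2*(m+1) + 1 := by
          have := Finset.mem_range.mp hi; omega
        have e := hβi _ h3 h4
        have e1 : i+1+1+1-2 = i+1 := by omega
        have e2 : i+1+1+1-1 = i+1+1 := by omega
        rw [e1, e2] at e
        linear_combination (iteratedDeriv (i+1+1) u t) * e]
    rw [Finset.sum_add_distrib, ← Finset.mul_sum]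
    rw [show ∑ i ∈ Finset.range (2*m+1+1), β (i+1) * iteratedDeriv (i+1) u t
        = ∑ i ∈ Finset.range (2*m+1), β (i+1+1) * iteratedDeriv (i+1+1) u t
          + β (0+1) * iteratedDeriv (0+1) u t from Finset.sum_range_succ' _ _]
    rw [show ∑ i ∈ Finset.range (2*m+1+1), β (i+1) * iteratedDeriv (i+1+1) u t
        = ∑ i ∈ Finset.range (2*m+1), β (i+1) * iteratedDeriv (i+1+1) u t
          + β (2*m+1+1) * iteratedDeriv (2*m+1+1+1) u t from Finset.sum_range_succ _ _]
    rw [show (2*m+3 : ℕ)+1 = 2*(m+1)+2 by ring, hβtop]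
    rw [show (2*(m+1) : ℕ) = 2*m+1+1 by ring]
    rw [show (2*m+3 : ℕ) = 2*m+1+1+1 by ring]
    rw [hβ1, hβ2]
    rw [iteratedDeriv_zero]
    simp only [Nat.zero_add]
    ring
  rw [hA, hB]
  have E0 := hlaw t
  have E1 := hE1 t
  have hεF : ε * ((u t - F t)/ε) = u t - F t := by field_simp
  linear_combination E0 + ε * E1 - ((1-ω)*κn) * hεF
end
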